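/- arXiv:2010.07640 — 5 statements merged into one kernel-verified Lean document; each statement's English description precedes it below -/
import Mathlib

section
/- Let (σ, ε) be an admissible pair for a division ring K, let κ ∈ K \ {0}, and define ρ(t) = κ·σ(t)·κ⁻¹ and η = κ·σ(κ)⁻¹·ε. Then κ·K_{σ,ε} = K_{ρ,η}, i.e. {κ·(t − σ(t)·ε) : t ∈ K} = {u − ρ(u)·η : u ∈ K}. -/
/-- An anti-automorphism of a division ring `K`: an additive bijection `σ` with
`σ (s * t) = σ t * σ s` and `σ 1 = 1`. -/
def IsAntiAuto {K : Type*} [DivisionRing K] (σ : K → K) : Prop :=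
  Function.Bijective σ ∧ (∀ s t : K, σ (s + t) = σ s + σ t) ∧
    (∀ s t : K, σ (s * t) = σ t * σ s) ∧ σ 1 = 1

/-- An admissible pair `(σ, ε)` for a division ring `K`. -/
def IsAdmissiblePair {K : Type*} [DivisionRing K] (σ : K → K) (ε : K) : Prop :=
  IsAntiAuto σ ∧ ε ≠ 0 ∧ σ ε = ε⁻¹ ∧ ∀ t : K, σ (σ t) = ε * t * ε⁻¹

/-!
Left multiplication by `κ` is a bijection of `K`, and it carries `t - σ t * ε` to
`u - ρ u * η` with `u = κ * t`: indeed `ρ (κ * t) * η = κ * σ t * σ κ * (σ κ)⁻¹ * ε = κ * σ t * ε`.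
-/

theorem IsAntiAuto.map_ne_zero {K : Type*} [DivisionRing K] {σ : K → K} (hσ : IsAntiAuto σ)
    {κ : K} (hκ : κ ≠ 0) : σ κ ≠ 0 := by
  obtain ⟨-, -, hmul, hone⟩ := hσ
  intro hσκ
  have h := hmul κ⁻¹ κ
  rw [inv_mul_cancel₀ hκ, hone, hσκ, zero_mul] at h
  exact one_ne_zero h

theorem mul_sub_eq_sub_twist {K : Type*} [DivisionRing K] {σ : K → K} {κ : K} (hκ : κ ≠ 0)
    (hσκ : σ κ ≠ 0) (hmul : ∀ t, σ (κ * t) = σ t * σ κ) (ε t : K) :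
    κ * (t - σ t * ε) = κ * t - (κ * σ (κ * t) * κ⁻¹) * (κ * (σ κ)⁻¹ * ε) := by
  rw [hmul, mul_sub]
  simp only [mul_assoc]
  rw [inv_mul_cancel_left₀ hκ, mul_inv_cancel_left₀ hσκ]

/-- For an admissible pair `(σ, ε)` and `κ ≠ 0`, with `ρ t = κ * σ t * κ⁻¹` and
`η = κ * (σ κ)⁻¹ * ε`, one has `κ · K_{σ,ε} = K_{ρ,η}`. -/
theorem statement6 {K : Type*} [DivisionRing K] (σ : K → K) (ε : K)
    (h : IsAdmissiblePair σ ε) (κ : K) (hκ : κ ≠ 0) :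
    {r : K | ∃ t : K, r = κ * (t - σ t * ε)} =
      {r : K | ∃ u : K, r = u - (κ * σ u * κ⁻¹) * (κ * (σ κ)⁻¹ * ε)} := by
  obtain ⟨hσ, -⟩ := h
  have twist := mul_sub_eq_sub_twist hκ (hσ.map_ne_zero hκ) (fun t => hσ.2.2.1 κ t) ε
  ext r
  constructor
  · rintro ⟨t, rfl⟩
    exact ⟨κ * t, twist t⟩
  · rintro ⟨u, rfl⟩
    refine ⟨κ⁻¹ * u, ?_⟩
    rw [twist, mul_inv_cancel_left₀ hκ]
end

section
/- Let (σ, ε) be an admissible pair for a division ring K. Then K_{σ,ε} = K if and only if σ = id_K, ε = −1 and the characteristic of K is different from 2 (in which case K is necessarily commutative). -/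
/-! Every element `r = t - σ t * ε` of `K_{σ,ε}` satisfies `σ r * ε = -r`. Taking `r = 1` forces
`ε = -1`, and then `σ r = r` for all `r`; for `σ = id, ε = -1` the set `K_{σ,ε}` is `{t + t}`,
which is all of `K` exactly when `2` is invertible. -/

/-- The additive group `K_{σ,ε}`. -/
def traceGroup {R : Type*} [Ring R] (σ : R → R) (ε : R) : Set R :=
  {r | ∃ t : R, r = t - σ t * ε}

namespace IsAdmissiblePair

variable {K : Type*} [DivisionRing K] {σ : K → K} {ε : K}

theorem map_mul_eq_neg_of_mem_traceGroup (h : IsAdmissiblePair σ ε) {r : K}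
    (hr : r ∈ traceGroup σ ε) : σ r * ε = -r := by
  obtain ⟨⟨-, hadd, hmul, -⟩, hε, hσε, hσσ⟩ := h
  obtain ⟨t, rfl⟩ := hr
  have hσ_sub : ∀ a b, σ (a - b) = σ a - σ b := (AddMonoidHom.mk' σ hadd).map_sub
  rw [hσ_sub, hmul, hσε, hσσ, sub_mul, mul_assoc, mul_assoc, mul_assoc, inv_mul_cancel₀ hε,
    mul_one, inv_mul_cancel_left₀ hε, neg_sub]

theorem eq_id_and_eq_neg_one_of_traceGroup_eq_univ (h : IsAdmissiblePair σ ε)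
    (hU : traceGroup σ ε = Set.univ) : σ = id ∧ ε = -1 := by
  have hall (r : K) : σ r * ε = -r := h.map_mul_eq_neg_of_mem_traceGroup (hU ▸ Set.mem_univ r)
  have hε : ε = -1 := by simpa [h.1.2.2.2] using hall 1
  refine ⟨funext fun r => ?_, hε⟩
  simpa [hε] using hall r

end IsAdmissiblePair

theorem traceGroup_id_neg_one_eq_univ_iff {K : Type*} [DivisionRing K] :
    traceGroup (id : K → K) (-1) = Set.univ ↔ ringChar K ≠ 2 := by
  have h_mem (r : K) : r ∈ traceGroup id (-1) ↔ ∃ t : K, r = 2 * t := by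
    simp only [traceGroup, Set.mem_ofPred_eq, id_eq, mul_neg_one, sub_neg_eq_add, two_mul]
  simp only [Set.eq_univ_iff_forall, h_mem]
  constructor
  · rintro hU hchar
    obtain ⟨t, ht⟩ := hU 1
    have h2 : (2 : K) = 0 := by exact_mod_cast hchar ▸ ringChar.Nat.cast_ringChar
    simp [h2] at ht
  · intro hchar r
    exact ⟨2⁻¹ * r, (mul_inv_cancel_left₀ (Ring.two_ne_zero hchar) r).symm⟩

/-- `K_{σ,ε} = K` if and only if `σ = id`, `ε = -1` and `char K ≠ 2`; in which
case `K` is necessarily commutative. -/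
theorem statement7 {K : Type*} [DivisionRing K] (σ : K → K) (ε : K)
    (h : IsAdmissiblePair σ ε) :
    ({r : K | ∃ t : K, r = t - σ t * ε} = Set.univ ↔
      (σ = id ∧ ε = -1 ∧ ringChar K ≠ 2)) ∧
    ({r : K | ∃ t : K, r = t - σ t * ε} = Set.univ → ∀ a b : K, a * b = b * a) := by
  change (traceGroup σ ε = Set.univ ↔ _) ∧ (traceGroup σ ε = Set.univ → _)
  refine ⟨⟨fun hU => ?_, ?_⟩, fun hU a b => ?_⟩
  · obtain ⟨rfl, rfl⟩ := h.eq_id_and_eq_neg_one_of_traceGroup_eq_univ hU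
    exact ⟨rfl, rfl, traceGroup_id_neg_one_eq_univ_iff.1 hU⟩
  · rintro ⟨rfl, rfl, hchar⟩
    exact traceGroup_id_neg_one_eq_univ_iff.2 hchar
  · obtain ⟨rfl, -⟩ := h.eq_id_and_eq_neg_one_of_traceGroup_eq_univ hU
    exact h.1.2.2.1 a b
end

section
/- Let (σ, ε) be an admissible pair for a division ring K and suppose K_{σ,ε} ≠ K. If f and g are (σ, ε)-sesquilinear forms on a right K-vector space V such that f(x, y) − g(x, y) ∈ K_{σ,ε} for all x, y ∈ V, then f = g. (In particular, the sesquilinearization of a pseudoquadratic form is uniquely determined when K_{σ,ε} ≠ K.) -/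
/-- A `(σ, ε)`-sesquilinear form on a right `K`-vector space `V`
(a right `K`-vector space is modelled as a module over `Kᵐᵒᵖ`;
the right scalar action `x · s` is `MulOpposite.op s • x`). -/
def IsSesquilinear {K V : Type*} [DivisionRing K] [AddCommGroup V] [Module Kᵐᵒᵖ V]
    (σ : K → K) (ε : K) (f : V → V → K) : Prop :=
  (∀ x y z : V, f (x + y) z = f x z + f y z) ∧
  (∀ x y z : V, f x (y + z) = f x y + f x z) ∧
  (∀ (x y : V) (s : K), f x (MulOpposite.op s • y) = f x y * s) ∧
  ∀ x y : V, f y x = σ (f x y) * ε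

theorem surjective_of_map_op_smul_eq_mul {K V : Type*} [DivisionRing K] [SMul Kᵐᵒᵖ V]
    (d : V → K) (hd : ∀ (y : V) (s : K), d (MulOpposite.op s • y) = d y * s)
    {y : V} (hy : d y ≠ 0) : Function.Surjective d := fun r =>
  ⟨MulOpposite.op ((d y)⁻¹ * r) • y, by rw [hd, ← mul_assoc, mul_inv_cancel₀ hy, one_mul]⟩

theorem IsSesquilinear.sub_apply_op_smul {K V : Type*} [DivisionRing K] [AddCommGroup V]
    [Module Kᵐᵒᵖ V] {σ : K → K} {ε : K} {f g : V → V → K} (hf : IsSesquilinear σ ε f)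
    (hg : IsSesquilinear σ ε g) (x y : V) (s : K) :
    f x (MulOpposite.op s • y) - g x (MulOpposite.op s • y) = (f x y - g x y) * s := by
  rw [hf.2.2.1, hg.2.2.1, sub_mul]

theorem statement8_general {K V : Type*} [DivisionRing K] [AddCommGroup V] [Module Kᵐᵒᵖ V]
    (σ : K → K) (ε : K)
    (hne : {r : K | ∃ t : K, r = t - σ t * ε} ≠ Set.univ)
    (f g : V → V → K) (hf : IsSesquilinear σ ε f) (hg : IsSesquilinear σ ε g)
    (hfg : ∀ x y : V, f x y - g x y ∈ {r : K | ∃ t : K, r = t - σ t * ε}) :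
    f = g := by
  funext x y
  by_contra hxy
  refine hne (Set.eq_univ_of_forall fun r => ?_)
  obtain ⟨z, rfl⟩ := surjective_of_map_op_smul_eq_mul (fun z => f x z - g x z)
    (hf.sub_apply_op_smul hg x) (sub_ne_zero.mpr hxy) r
  exact hfg x z

/-- If `K_{σ,ε} ≠ K` and two `(σ, ε)`-sesquilinear forms `f`, `g` satisfy
`f x y - g x y ∈ K_{σ,ε}` for all `x, y`, then `f = g`. -/
theorem statement8 {K V : Type*} [DivisionRing K] [AddCommGroup V] [Module Kᵐᵒᵖ V]
    (σ : K → K) (ε : K) (h : IsAdmissiblePair σ ε)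
    (hne : {r : K | ∃ t : K, r = t - σ t * ε} ≠ Set.univ)
    (f g : V → V → K) (hf : IsSesquilinear σ ε f) (hg : IsSesquilinear σ ε g)
    (hfg : ∀ x y : V, f x y - g x y ∈ {r : K | ∃ t : K, r = t - σ t * ε}) :
    f = g :=
  statement8_general σ ε hne f g hf hg hfg
end

section
/- Let (σ, ε) and (ρ, η) be admissible pairs for a division ring K with ε, η ∈ {1, −1}, and let c₁, c₂ ∈ K \ {0}. Suppose that for all s, t ∈ K one has s + σ(t)·ε = 0 if and only if c₁·s + ρ(t)·ρ(c₂)·η = 0. Then ρ(t) = ρ(c₂)·σ(t)·ρ(c₂)⁻¹ for every t ∈ K, and ρ(c₂) = σ(c₂). -/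
/-!
Putting `s = -σ(t)ε` in the hypothesis gives `ρ(t)ρ(c₂)η = c₁σ(t)ε` for all `t`, and `t = 1`
identifies `c₁ε = ρ(c₂)η`. Since `ε, η = ±1` are central units, this says
`ρ(t)ρ(c₂) = ρ(c₂)σ(t)`; taking `t = c₂` and cancelling `ρ(c₂) ≠ 0` gives `ρ(c₂) = σ(c₂)`.
-/

section SignUnit

variable {R : Type*} [Ring R] {x : R}

theorem commute_of_eq_one_or_eq_neg_one (hx : x = 1 ∨ x = -1) (y : R) : Commute x y := by
  rcases hx with rfl | rfl
  exacts [Commute.one_left y, Commute.neg_one_left y]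

theorem isUnit_of_eq_one_or_eq_neg_one (hx : x = 1 ∨ x = -1) : IsUnit x := by
  rcases hx with rfl | rfl
  exacts [isUnit_one, isUnit_one.neg]

end SignUnit

namespace IsAntiAuto

variable {K : Type*} [DivisionRing K] {σ : K → K}

theorem map_zero (hσ : IsAntiAuto σ) : σ 0 = 0 :=
  (AddMonoidHom.mk' σ hσ.2.1).map_zero

theorem map_ne_zero_s13 (hσ : IsAntiAuto σ) {x : K} (hx : x ≠ 0) : σ x ≠ 0 :=
  fun h => hx (hσ.1.1 (h.trans hσ.map_zero.symm))

theorem map_one (hσ : IsAntiAuto σ) : σ 1 = 1 :=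
  hσ.2.2.2

end IsAntiAuto

theorem apply_mul_eq_mul_apply_of_forall_mul_eq {R : Type*} [Ring R] {σ ρ : R → R}
    (hσ1 : σ 1 = 1) (hρ1 : ρ 1 = 1) {ε η c d : R} (hε : ∀ y, Commute ε y)
    (hη : ∀ y, Commute η y) (hηu : IsUnit η) (h : ∀ t, ρ t * d * η = c * (σ t * ε)) (t : R) :
    ρ t * d = d * σ t := by
  have h1 : d * η = c * ε := by simpa [hσ1, hρ1] using h 1
  rw [← hηu.mul_left_inj]
  calc ρ t * d * η = c * (σ t * ε) := h t
    _ = c * ε * σ t := by rw [← (hε _).eq, mul_assoc]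
    _ = d * η * σ t := by rw [h1]
    _ = d * σ t * η := by rw [mul_assoc, (hη _).eq, mul_assoc]

theorem statement13_general {K : Type*} [DivisionRing K]
    (σ : K → K) (ε : K) (hσ : IsAdmissiblePair σ ε)
    (ρ : K → K) (η : K) (hρ : IsAdmissiblePair ρ η)
    (hε : ε = 1 ∨ ε = -1) (hη : η = 1 ∨ η = -1)
    (c₁ c₂ : K) (hc₂ : c₂ ≠ 0)
    (hiff : ∀ s t : K, s + σ t * ε = 0 ↔ c₁ * s + ρ t * ρ c₂ * η = 0) :
    (∀ t : K, ρ t = ρ c₂ * σ t * (ρ c₂)⁻¹) ∧ ρ c₂ = σ c₂ := by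
  have hkey (t : K) : ρ t * ρ c₂ * η = c₁ * (σ t * ε) := by
    have h := (hiff (-(σ t * ε)) t).mp (neg_add_cancel _)
    rwa [mul_neg, neg_add_eq_zero, eq_comm] at h
  have hcomm := apply_mul_eq_mul_apply_of_forall_mul_eq hσ.1.map_one hρ.1.map_one
    (commute_of_eq_one_or_eq_neg_one hε) (commute_of_eq_one_or_eq_neg_one hη)
    (isUnit_of_eq_one_or_eq_neg_one hη) hkey
  have hd : ρ c₂ ≠ 0 := hρ.1.map_ne_zero_s13 hc₂
  refine ⟨fun t => ?_, mul_left_cancel₀ hd (hcomm c₂)⟩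
  rw [← hcomm t, mul_inv_cancel_right₀ hd]

/-- With `ε, η ∈ {1, -1}`, if `s + σ t * ε = 0 ↔ c₁ * s + ρ t * ρ c₂ * η = 0` for
all `s, t`, then `ρ t = ρ c₂ * σ t * (ρ c₂)⁻¹` for every `t`, and `ρ c₂ = σ c₂`. -/
theorem statement13 {K : Type*} [DivisionRing K]
    (σ : K → K) (ε : K) (hσ : IsAdmissiblePair σ ε)
    (ρ : K → K) (η : K) (hρ : IsAdmissiblePair ρ η)
    (hε : ε = 1 ∨ ε = -1) (hη : η = 1 ∨ η = -1)
    (c₁ c₂ : K) (hc₁ : c₁ ≠ 0) (hc₂ : c₂ ≠ 0)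
    (hiff : ∀ s t : K, s + σ t * ε = 0 ↔ c₁ * s + ρ t * ρ c₂ * η = 0) :
    (∀ t : K, ρ t = ρ c₂ * σ t * (ρ c₂)⁻¹) ∧ ρ c₂ = σ c₂ :=
  statement13_general σ ε hσ ρ η hρ hε hη c₁ c₂ hc₂ hiff
end

section
/- Let K be a division ring, σ and ρ anti-automorphisms of K, and c₁, c₂ ∈ K \ {0}. Suppose that for all s, t ∈ K one has 1 + σ(t)·s = 0 if and only if c₁ + ρ(t)·c₂·s = 0. Then c₁·σ(t) = ρ(t)·c₂ for every t ∈ K, and in particular c₁ = c₂. -/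
theorem mul_eq_of_forall_one_add_mul_eq_zero_iff {K : Type*} [DivisionRing K] {x y c : K}
    (h : ∀ s : K, 1 + x * s = 0 ↔ c + y * s = 0) : c * x = y := by
  rcases eq_or_ne x 0 with rfl | hx
  -- `1 + 0 * s = 0` has no solution, so neither may `c + y * s = 0`, which forces `y = 0`.
  · rw [mul_zero]
    by_contra hy
    have hsol : c + y * -(y⁻¹ * c) = 0 := by
      rw [mul_neg, mul_inv_cancel_left₀ (Ne.symm hy), add_neg_cancel]
    simpa using (h _).mpr hsol
  · have hsol : 1 + x * -x⁻¹ = 0 := by rw [mul_neg, mul_inv_cancel₀ hx, add_neg_cancel]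
    have hc := (h _).mp hsol
    rw [mul_neg, ← sub_eq_add_neg, sub_eq_zero] at hc
    rw [hc, inv_mul_cancel_right₀ hx]

theorem statement14_general {K : Type*} [DivisionRing K]
    (σ : K → K) (hσ : IsAntiAuto σ)
    (ρ : K → K) (hρ : IsAntiAuto ρ)
    (c₁ c₂ : K)
    (hiff : ∀ s t : K, 1 + σ t * s = 0 ↔ c₁ + ρ t * c₂ * s = 0) :
    (∀ t : K, c₁ * σ t = ρ t * c₂) ∧ c₁ = c₂ := by
  have key (t : K) : c₁ * σ t = ρ t * c₂ :=
    mul_eq_of_forall_one_add_mul_eq_zero_iff fun s => hiff s t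
  refine ⟨key, ?_⟩
  simpa [hσ.2.2.2, hρ.2.2.2] using key 1

/-- If `1 + σ t * s = 0 ↔ c₁ + ρ t * c₂ * s = 0` for all `s, t`, then
`c₁ * σ t = ρ t * c₂` for every `t`; in particular `c₁ = c₂`. -/
theorem statement14 {K : Type*} [DivisionRing K]
    (σ : K → K) (hσ : IsAntiAuto σ)
    (ρ : K → K) (hρ : IsAntiAuto ρ)
    (c₁ c₂ : K) (hc₁ : c₁ ≠ 0) (hc₂ : c₂ ≠ 0)
    (hiff : ∀ s t : K, 1 + σ t * s = 0 ↔ c₁ + ρ t * c₂ * s = 0) :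
    (∀ t : K, c₁ * σ t = ρ t * c₂) ∧ c₁ = c₂ :=
  statement14_general σ hσ ρ hρ c₁ c₂ hiff
end
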